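/- arXiv:1905.07640 — 2 statements merged into one kernel-verified Lean document; each statement's English description precedes it below -/
import Mathlib

section
/- Let ε > 0 and t ≥ 0, and set ρ(y) = exp(y²/(8(1+t/ε))) for y > 0. If f : (0,∞) → ℂ is continuously differentiable, ρ∂_y f ∈ L²(0,∞), ρf and yρf belong to L²(0,∞), and y ρ(y)²|f(y)|² → 0 as y → ∞ and as y → 0⁺, then ‖ρf‖²_{L²(0,∞)} + (1/(4(1+t/ε))) ‖yρf‖²_{L²(0,∞)} ≤ 4(1+t/ε) ‖ρ∂_y f‖²_{L²(0,∞)}. -/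
open MeasureTheory Set Filter

noncomputable section

/-- Gaussian weight `ρ(y) = exp(y²/(8(1+t/ε)))`. -/
def rho (ε t y : ℝ) : ℝ := Real.exp (y ^ 2 / (8 * (1 + t / ε)))

/-!
With `w = ρ² = exp (a y²)` and `a = 1 / (4 (1 + t/ε))`, the derivative of `y w ‖f‖²` is
`w ‖f‖² + 2a y² w ‖f‖² + 2 y w ⟪f, f'⟫`; its integral over `(0, ∞)` vanishes by the boundary
conditions. Bounding the cross term by Young's inequality
`2 |y| ‖f‖ ‖f'‖ ≤ a y² ‖f‖² + ‖f'‖² / a` leaves `∫ w ‖f‖² + a ∫ y² w ‖f‖² ≤ a⁻¹ ∫ w ‖f'‖²`.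
-/

open Real Topology InnerProductSpace

section
variable {F : Type*} [NormedAddCommGroup F] [InnerProductSpace ℝ F]

lemma abs_two_mul_mul_inner_le {a : ℝ} (ha : 0 < a) (y : ℝ) (u v : F) :
    |2 * y * ⟪u, v⟫_ℝ| ≤ a * y ^ 2 * ‖u‖ ^ 2 + ‖v‖ ^ 2 / a := by
  have hcs : |2 * y * ⟪u, v⟫_ℝ| ≤ 2 * |y| * ‖u‖ * ‖v‖ := by
    rw [abs_mul, abs_mul, abs_two, mul_assoc _ ‖u‖]
    gcongr
    exact abs_real_inner_le_norm u v
  have hsq : 0 ≤ (a * |y| * ‖u‖ - ‖v‖) ^ 2 / a := by positivity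
  have hexp : (a * |y| * ‖u‖ - ‖v‖) ^ 2 / a
      = a * y ^ 2 * ‖u‖ ^ 2 + ‖v‖ ^ 2 / a - 2 * |y| * ‖u‖ * ‖v‖ := by
    field_simp
    rw [← sq_abs y]
    ring
  linarith

lemma hasDerivAt_mul_exp_mul_sq_mul_norm_sq (a : ℝ) {f : ℝ → F} {f' : F} {y : ℝ}
    (hf : HasDerivAt f f' y) :
    HasDerivAt (fun z => z * exp (a * z ^ 2) * ‖f z‖ ^ 2)
      (exp (a * y ^ 2) * ‖f y‖ ^ 2 + 2 * a * (y ^ 2 * exp (a * y ^ 2) * ‖f y‖ ^ 2)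
        + exp (a * y ^ 2) * (2 * y * ⟪f y, f'⟫_ℝ)) y := by
  have hexp : HasDerivAt (fun z => exp (a * z ^ 2)) (exp (a * y ^ 2) * (a * (2 * y))) y := by
    simpa using ((hasDerivAt_pow 2 y).const_mul a).exp
  refine (((hasDerivAt_id' y).fun_mul hexp).fun_mul hf.norm_sq).congr_deriv ?_
  ring

theorem weighted_poincare_hardy_of_exp_mul_sq [CompleteSpace F] {a : ℝ} (ha : 0 < a)
    {f : ℝ → F} (hf : DifferentiableOn ℝ f (Ioi 0))
    (hL2 : IntegrableOn (fun y => exp (a * y ^ 2) * ‖f y‖ ^ 2) (Ioi 0))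
    (hyL2 : IntegrableOn (fun y => y ^ 2 * exp (a * y ^ 2) * ‖f y‖ ^ 2) (Ioi 0))
    (hderiv : IntegrableOn (fun y => exp (a * y ^ 2) * ‖deriv f y‖ ^ 2) (Ioi 0))
    (hzero : Tendsto (fun y => y * exp (a * y ^ 2) * ‖f y‖ ^ 2) (𝓝[>] 0) (𝓝 0))
    (htop : Tendsto (fun y => y * exp (a * y ^ 2) * ‖f y‖ ^ 2) atTop (𝓝 0)) :
    (∫ y in Ioi 0, exp (a * y ^ 2) * ‖f y‖ ^ 2)
        + a * ∫ y in Ioi 0, y ^ 2 * exp (a * y ^ 2) * ‖f y‖ ^ 2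
      ≤ 1 / a * ∫ y in Ioi 0, exp (a * y ^ 2) * ‖deriv f y‖ ^ 2 := by
  set cross : ℝ → ℝ := fun y => exp (a * y ^ 2) * (2 * y * ⟪f y, deriv f y⟫_ℝ)
  set bound : ℝ → ℝ := fun y =>
    a * (y ^ 2 * exp (a * y ^ 2) * ‖f y‖ ^ 2) + 1 / a * (exp (a * y ^ 2) * ‖deriv f y‖ ^ 2)
  have hcross_le : ∀ y, |cross y| ≤ bound y := fun y => calc
    |cross y| = exp (a * y ^ 2) * |2 * y * ⟪f y, deriv f y⟫_ℝ| := by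
      rw [abs_mul, abs_of_pos (exp_pos _)]
    _ ≤ exp (a * y ^ 2) * (a * y ^ 2 * ‖f y‖ ^ 2 + ‖deriv f y‖ ^ 2 / a) := by
      gcongr; exact abs_two_mul_mul_inner_le ha y _ _
    _ = bound y := by ring
  have hbound : IntegrableOn bound (Ioi 0) := (hyL2.const_mul a).add (hderiv.const_mul _)
  have hcross : IntegrableOn cross (Ioi 0) := by
    refine hbound.mono' ?_ (ae_of_all _ fun y => (Real.norm_eq_abs _).trans_le (hcross_le y))
    exact (by fun_prop : Continuous fun y => exp (a * y ^ 2)).aestronglyMeasurable.mul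
      ((continuous_const.mul continuous_id).aestronglyMeasurable.mul
        ((hf.continuousOn.aestronglyMeasurable measurableSet_Ioi).inner
          (aestronglyMeasurable_deriv f _)))
  have hweighted : IntegrableOn (fun y => exp (a * y ^ 2) * ‖f y‖ ^ 2
      + 2 * a * (y ^ 2 * exp (a * y ^ 2) * ‖f y‖ ^ 2)) (Ioi 0) := hL2.add (hyL2.const_mul _)
  have hibp : ∫ y in Ioi 0, (exp (a * y ^ 2) * ‖f y‖ ^ 2
      + 2 * a * (y ^ 2 * exp (a * y ^ 2) * ‖f y‖ ^ 2) + cross y) = 0 := by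
    have := integral_Ioi_of_hasDerivAt_of_tendsto
      (continuousWithinAt_Ioi_iff_Ici.mp (by rw [ContinuousWithinAt]; simpa using hzero))
      (fun y hy => hasDerivAt_mul_exp_mul_sq_mul_norm_sq a
        (hf.differentiableAt (Ioi_mem_nhds hy)).hasDerivAt)
      (hweighted.add hcross) htop
    simpa using this
  have hcross_ge : -∫ y in Ioi 0, bound y ≤ ∫ y in Ioi 0, cross y := by
    rw [← integral_neg]
    exact setIntegral_mono hbound.neg hcross fun y => neg_le_of_abs_le (hcross_le y)
  rw [integral_add hweighted hcross, integral_add hL2 (hyL2.const_mul _),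
    integral_const_mul] at hibp
  rw [integral_add (hyL2.const_mul _) (hderiv.const_mul _), integral_const_mul,
    integral_const_mul] at hcross_ge
  linarith

end

lemma rho_sq (ε t y : ℝ) : rho ε t y ^ 2 = exp (1 / (4 * (1 + t / ε)) * y ^ 2) := by
  rw [rho, ← exp_nat_mul]
  congr 1
  generalize 1 + t / ε = K
  push_cast
  ring

/-- **Weighted Poincaré/Hardy inequality** (Lemma 4.1 of the paper):
`‖ρf‖²_{L²(0,∞)} + (1/(4(1+t/ε))) ‖yρf‖²_{L²(0,∞)} ≤ 4(1+t/ε) ‖ρ∂_y f‖²_{L²(0,∞)}`. -/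
theorem weighted_poincare_hardy
    (ε t : ℝ) (hε : 0 < ε) (ht : 0 ≤ t)
    (f : ℝ → ℂ)
    (hf : ContDiffOn ℝ 1 f (Ioi 0))
    (hderiv : IntegrableOn (fun y => (rho ε t y) ^ 2 * ‖deriv f y‖ ^ 2) (Ioi 0))
    (hL2 : IntegrableOn (fun y => (rho ε t y) ^ 2 * ‖f y‖ ^ 2) (Ioi 0))
    (hyL2 : IntegrableOn (fun y => y ^ 2 * (rho ε t y) ^ 2 * ‖f y‖ ^ 2) (Ioi 0))
    (hvanish_top : Tendsto (fun y => y * (rho ε t y) ^ 2 * ‖f y‖ ^ 2) atTop (nhds 0))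
    (hvanish_zero : Tendsto (fun y => y * (rho ε t y) ^ 2 * ‖f y‖ ^ 2)
      (nhdsWithin 0 (Ioi 0)) (nhds 0)) :
    (∫ y in Ioi (0 : ℝ), (rho ε t y) ^ 2 * ‖f y‖ ^ 2)
      + (1 / (4 * (1 + t / ε))) * ∫ y in Ioi (0 : ℝ), y ^ 2 * (rho ε t y) ^ 2 * ‖f y‖ ^ 2
      ≤ 4 * (1 + t / ε) * ∫ y in Ioi (0 : ℝ), (rho ε t y) ^ 2 * ‖deriv f y‖ ^ 2 := by
  simp only [rho_sq] at hderiv hL2 hyL2 hvanish_top hvanish_zero ⊢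
  have ha : 0 < 1 / (4 * (1 + t / ε)) := by positivity
  simpa only [one_div_one_div] using weighted_poincare_hardy_of_exp_mul_sq ha
    (hf.differentiableOn one_ne_zero) hL2 hyL2 hderiv hvanish_zero hvanish_top
end
end

section
/- Let ε ∈ (0,1], t ∈ [0,ε], ρ(y) = exp(y²/(8(1+t/ε))), ⟨ξ⟩ = (1+ξ²)^{1/2} and θ_ξ(y) = 1 − exp(−y²⟨ξ⟩²/(2(1+t/ε))), whose time derivative is ∂_t θ_ξ(y) = −(y²⟨ξ⟩²/(2ε(1+t/ε)²)) exp(−y²⟨ξ⟩²/(2(1+t/ε))). There is a universal constant C (independent of ξ, t, ε) such that ‖ρ ∂_t θ_ξ‖_{L²_y(0,∞)} ≤ C ε⁻¹ ⟨ξ⟩^{−1/2} for every ξ ∈ ℝ. -/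
open MeasureTheory Set Filter

noncomputable section

/-- Japanese bracket `⟨ξ⟩ = √(1+ξ²)`. -/
def brak (ξ : ℝ) : ℝ := Real.sqrt (1 + ξ ^ 2)

/-- Time derivative of the lift function `θ_ξ(y) = 1 − exp(−y²⟨ξ⟩²/(2(1+t/ε)))`:
`∂_t θ_ξ(y) = −(y²⟨ξ⟩²/(2ε(1+t/ε)²)) exp(−y²⟨ξ⟩²/(2(1+t/ε)))`. -/
def dtTheta (ε t ξ y : ℝ) : ℝ :=
  -(y ^ 2 * (1 + ξ ^ 2) / (2 * ε * (1 + t / ε) ^ 2)) *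
    Real.exp (-(y ^ 2 * (1 + ξ ^ 2)) / (2 * (1 + t / ε)))

/-- `x² ≤ 16 exp(x/2)` for `x ≥ 0`. -/
lemma sq_le_sixteen_exp {x : ℝ} (hx : 0 ≤ x) : x ^ 2 ≤ 16 * Real.exp (x / 2) := by
  have h := Real.add_one_le_exp (x / 4)
  have h2 : Real.exp (x / 2) = Real.exp (x / 4) * Real.exp (x / 4) := by
    rw [← Real.exp_add]; ring_nf
  nlinarith [Real.exp_pos (x / 4)]

set_option maxHeartbeats 1000000 in
/-- **Bound (4.19) of the paper**: `‖ρ ∂_t θ_ξ‖_{L²_y(0,∞)} ≤ C ε⁻¹ ⟨ξ⟩^{−1/2}` with a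
universal constant `C` independent of `ξ`, `t`, `ε`. -/
theorem dtTheta_L2_bound :
    ∃ C : ℝ, 0 < C ∧ ∀ ε t ξ : ℝ, 0 < ε → ε ≤ 1 → 0 ≤ t → t ≤ ε →
      Real.sqrt (∫ y in Ioi (0 : ℝ), (rho ε t y * dtTheta ε t ξ y) ^ 2)
        ≤ C * ε⁻¹ * brak ξ ^ (-(1 : ℝ) / 2) := by
  refine ⟨9, by norm_num, ?_⟩
  intro ε t ξ hε hε1 ht htε
  set B : ℝ := 1 + ξ ^ 2 with hBdef
  have hB : (1 : ℝ) ≤ B := by nlinarith [sq_nonneg ξ]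
  have hB0 : (0 : ℝ) < B := by linarith
  set s : ℝ := 1 + t / ε with hsdef
  have hs1 : (1 : ℝ) ≤ s := by
    have : 0 ≤ t / ε := div_nonneg ht hε.le
    simp only [hsdef]; linarith
  have hs2 : s ≤ 2 := by
    have : t / ε ≤ 1 := (div_le_one hε).mpr htε
    simp only [hsdef]; linarith
  have hs0 : (0 : ℝ) < s := by linarith
  set c : ℝ := 3 * B / 16 with hcdef
  have hc : (0 : ℝ) < c := by positivity
  set A : ℝ := 256 / (9 * ε ^ 2) with hAdef
  have hA : (0 : ℝ) < A := by positivity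
  -- pointwise bound
  have hpt : ∀ y : ℝ, (rho ε t y * dtTheta ε t ξ y) ^ 2 ≤ A * Real.exp (-c * y ^ 2) := by
    intro y
    have hy2 : (0 : ℝ) ≤ y ^ 2 := sq_nonneg y
    have hL : (rho ε t y * dtTheta ε t ξ y) ^ 2
        = (y ^ 2 * B / (2 * ε * s ^ 2)) ^ 2
          * Real.exp ((y ^ 2 / (8 * s) + -(y ^ 2 * B) / (2 * s))
            + (y ^ 2 / (8 * s) + -(y ^ 2 * B) / (2 * s))) := by
      simp only [rho, dtTheta, ← hsdef, ← hBdef]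
      rw [Real.exp_add, Real.exp_add]
      ring
    rw [hL]
    -- exponent bound
    have hexp : (y ^ 2 / (8 * s) + -(y ^ 2 * B) / (2 * s))
        + (y ^ 2 / (8 * s) + -(y ^ 2 * B) / (2 * s)) ≤ -(3 * B / 8) * y ^ 2 := by
      have hrw : (y ^ 2 / (8 * s) + -(y ^ 2 * B) / (2 * s))
          + (y ^ 2 / (8 * s) + -(y ^ 2 * B) / (2 * s))
          = (y ^ 2 / 4 - y ^ 2 * B) / s := by
        field_simp
        ring
      rw [hrw, div_le_iff₀ hs0]
      nlinarith [mul_nonneg (mul_nonneg (by linarith : (0:ℝ) ≤ 3 * B / 8) hy2)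
          (by linarith : (0:ℝ) ≤ 2 - s),
        mul_nonneg hy2 (by linarith : (0:ℝ) ≤ B - 1)]
    -- factor bound
    have hfac : (y ^ 2 * B / (2 * ε * s ^ 2)) ^ 2 ≤ (y ^ 2 * B) ^ 2 / (4 * ε ^ 2) := by
      rw [div_pow]
      apply div_le_div_of_nonneg_left (sq_nonneg _) (by positivity)
      have hs4 : (1 : ℝ) ≤ s ^ 4 := by
        nlinarith [mul_nonneg (by linarith : (0:ℝ) ≤ s - 1) (by linarith : (0:ℝ) ≤ s + 1),
          sq_nonneg (s ^ 2 - 1)]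
      nlinarith [mul_pos hε hε, hs4]
    have step2 : (y ^ 2 * B / (2 * ε * s ^ 2)) ^ 2
        * Real.exp ((y ^ 2 / (8 * s) + -(y ^ 2 * B) / (2 * s))
            + (y ^ 2 / (8 * s) + -(y ^ 2 * B) / (2 * s)))
        ≤ (y ^ 2 * B) ^ 2 / (4 * ε ^ 2) * Real.exp (-(3 * B / 8) * y ^ 2) :=
      mul_le_mul hfac (Real.exp_le_exp.mpr hexp) (Real.exp_pos _).le (by positivity)
    refine step2.trans ?_
    -- moment bound
    set x : ℝ := 3 * B / 8 * y ^ 2 with hxdef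
    have hx0 : (0 : ℝ) ≤ x := by positivity
    have hxx : (y ^ 2 * B) ^ 2 = 64 / 9 * x ^ 2 := by rw [hxdef]; ring
    have h16 := sq_le_sixteen_exp hx0
    have hkey : (y ^ 2 * B) ^ 2 * Real.exp (-(3 * B / 8) * y ^ 2)
        ≤ 1024 / 9 * Real.exp (-c * y ^ 2) := by
      have hme : -(3 * B / 8) * y ^ 2 = -x := by rw [hxdef]; ring
      have hsplit : Real.exp (x / 2) * Real.exp (-x) = Real.exp (-c * y ^ 2) := by
        rw [← Real.exp_add]
        congr 1
        rw [hxdef, hcdef]; ring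
      calc (y ^ 2 * B) ^ 2 * Real.exp (-(3 * B / 8) * y ^ 2)
          = 64 / 9 * x ^ 2 * Real.exp (-x) := by rw [hxx, hme]
        _ ≤ 64 / 9 * (16 * Real.exp (x / 2)) * Real.exp (-x) := by
            apply mul_le_mul_of_nonneg_right _ (Real.exp_pos _).le
            nlinarith
        _ = 1024 / 9 * (Real.exp (x / 2) * Real.exp (-x)) := by ring
        _ = 1024 / 9 * Real.exp (-c * y ^ 2) := by rw [hsplit]
    calc (y ^ 2 * B) ^ 2 / (4 * ε ^ 2) * Real.exp (-(3 * B / 8) * y ^ 2)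
        = (y ^ 2 * B) ^ 2 * Real.exp (-(3 * B / 8) * y ^ 2) / (4 * ε ^ 2) := by ring
      _ ≤ 1024 / 9 * Real.exp (-c * y ^ 2) / (4 * ε ^ 2) := by
          gcongr
      _ = A * Real.exp (-c * y ^ 2) := by rw [hAdef]; field_simp; ring
  -- integral bound
  have hInt : IntegrableOn (fun y => A * Real.exp (-c * y ^ 2)) (Ioi (0 : ℝ)) :=
    ((integrable_exp_neg_mul_sq hc).const_mul A).integrableOn
  have hmono : (∫ y in Ioi (0 : ℝ), (rho ε t y * dtTheta ε t ξ y) ^ 2)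
      ≤ ∫ y in Ioi (0 : ℝ), A * Real.exp (-c * y ^ 2) :=
    integral_mono_of_nonneg (ae_of_all _ fun y => sq_nonneg _) hInt (ae_of_all _ fun y => hpt y)
  have hval : (∫ y in Ioi (0 : ℝ), A * Real.exp (-c * y ^ 2))
      = A * (Real.sqrt (Real.pi / c) / 2) := by
    rw [integral_const_mul, integral_gaussian_Ioi]
  have hsB : (0 : ℝ) < Real.sqrt B := Real.sqrt_pos.mpr hB0
  have hbound : A * (Real.sqrt (Real.pi / c) / 2) ≤ 81 / ε ^ 2 * (Real.sqrt B)⁻¹ := by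
    have h1 : Real.pi / c ≤ 25 / B := by
      rw [hcdef, div_le_div_iff₀ (by positivity) hB0]
      nlinarith [Real.pi_le_four, Real.pi_pos]
    have h3 : Real.sqrt (25 / B) = 5 / Real.sqrt B := by
      rw [Real.sqrt_div (by norm_num : (0:ℝ) ≤ 25) B,
        show (25 : ℝ) = 5 ^ 2 by norm_num, Real.sqrt_sq (by norm_num : (0:ℝ) ≤ 5)]
    have h2 : Real.sqrt (Real.pi / c) ≤ 5 / Real.sqrt B :=
      h3 ▸ Real.sqrt_le_sqrt h1
    calc A * (Real.sqrt (Real.pi / c) / 2) ≤ A * (5 / Real.sqrt B / 2) := by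
          apply mul_le_mul_of_nonneg_left _ hA.le
          linarith
      _ = 640 / (9 * ε ^ 2) * (Real.sqrt B)⁻¹ := by rw [hAdef]; field_simp; ring
      _ ≤ 81 / ε ^ 2 * (Real.sqrt B)⁻¹ := by
          apply mul_le_mul_of_nonneg_right _ (by positivity)
          rw [div_le_div_iff₀ (by positivity) (by positivity)]
          nlinarith
  have htotal : (∫ y in Ioi (0 : ℝ), (rho ε t y * dtTheta ε t ξ y) ^ 2)
      ≤ 81 / ε ^ 2 * (Real.sqrt B)⁻¹ := hmono.trans (hval ▸ hbound)
  have hRHS : brak ξ ^ (-(1 : ℝ) / 2) = Real.sqrt ((Real.sqrt B)⁻¹) := by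
    rw [show brak ξ = Real.sqrt B from by rw [brak, hBdef], neg_div,
      Real.rpow_neg (Real.sqrt_nonneg _), ← Real.sqrt_eq_rpow, ← Real.sqrt_inv]
  calc Real.sqrt (∫ y in Ioi (0 : ℝ), (rho ε t y * dtTheta ε t ξ y) ^ 2)
      ≤ Real.sqrt (81 / ε ^ 2 * (Real.sqrt B)⁻¹) := Real.sqrt_le_sqrt htotal
    _ = 9 * ε⁻¹ * Real.sqrt ((Real.sqrt B)⁻¹) := by
        rw [show (81 : ℝ) / ε ^ 2 = (9 * ε⁻¹) ^ 2 by field_simp; norm_num,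
          Real.sqrt_mul (sq_nonneg _), Real.sqrt_sq (by positivity)]
    _ = 9 * ε⁻¹ * brak ξ ^ (-(1 : ℝ) / 2) := by rw [hRHS]
end
end
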